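/- Lower bound on the measure of an ε-concentration set for the Gabor QLCT: let f, φ ∈ L²(ℝ², ℍ) with ‖f‖₂ = ‖φ‖₂ = 1, let Σ ⊆ ℝ² × ℝ² be Lebesgue measurable, and let 0 ≤ ε ≤ 1. If ∫∫_Σ |G_φ f(ω, y)|² dω dy ≥ 1 − ε, then 4π² b₁ b₂ (1 − ε) ≤ m(Σ), where m(Σ) is the Lebesgue measure of Σ. -/

import Mathlib

open MeasureTheory
open scoped ENNReal NNReal

noncomputable section

/-- The quaternion imaginary unit `i`. -/
def qi : Quaternion ℝ := ⟨0, 1, 0, 0⟩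

/-- The quaternion imaginary unit `j`. -/
def qj : Quaternion ℝ := ⟨0, 0, 1, 0⟩

/-- The LCT kernel `(2πb)^(-1/2) exp((u/2)((a/b)x² - (2/b)xω + (d/b)ω² - π/2))`
with pure imaginary unit `u` and parameters `a`, `b`, `d`. -/
def qK (a b d : ℝ) (u : Quaternion ℝ) (x ω : ℝ) : Quaternion ℝ :=
  ((2 * Real.pi * b) ^ (-(1 : ℝ) / 2) : ℝ) •
    NormedSpace.exp
      ((((a / b) * x ^ 2 - (2 / b) * x * ω + (d / b) * ω ^ 2 - Real.pi / 2) / 2 : ℝ) • u)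

/-- The two-sided quaternion linear canonical transform. -/
def QLCT (a₁ b₁ d₁ a₂ b₂ d₂ : ℝ) (f : ℝ × ℝ → Quaternion ℝ) (ω : ℝ × ℝ) : Quaternion ℝ :=
  ∫ x : ℝ × ℝ, qK a₁ b₁ d₁ qi x.1 ω.1 * f x * qK a₂ b₂ d₂ qj x.2 ω.2

/-- The Gabor quaternion linear canonical transform with window `φ`. -/
def GQLCT (a₁ b₁ d₁ a₂ b₂ d₂ : ℝ) (φ f : ℝ × ℝ → Quaternion ℝ) (ω y : ℝ × ℝ) :
    Quaternion ℝ :=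
  ∫ x : ℝ × ℝ,
    qK a₁ b₁ d₁ qi x.1 ω.1 * f x * star (φ (x - y)) * qK a₂ b₂ d₂ qj x.2 ω.2

/-- The Euclidean norm on `ℝ × ℝ`. -/
def enorm2 (x : ℝ × ℝ) : ℝ := Real.sqrt (x.1 ^ 2 + x.2 ^ 2)

/-- The constant `D = ψ(1/2) - ln π`, where `ψ` is the digamma function. -/
def Dconst : ℝ := deriv (fun t : ℝ => Real.log (Real.Gamma t)) (1 / 2) - Real.log Real.pi

/-!
The kernels have constant modulus `(2πb)^(-1/2)`, so `|G_φ f(ω, y)|` is bounded by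
`(4π² b₁ b₂)^(-1/2)` times `∫ |f(x)| |φ(x - y)| dx ≤ ‖f‖₂ ‖φ‖₂ = 1` (Cauchy–Schwarz).
Hence `1 - ε ≤ ∫∫_Σ |G_φ f|² ≤ m(Σ) / (4π² b₁ b₂)`.
-/

theorem enorm_setIntegral_le_ofReal_mul_measure {α E : Type*} [MeasurableSpace α]
    [NormedAddCommGroup E] [NormedSpace ℝ E] {μ : Measure α} {s : Set α} {f : α → E} {C : ℝ}
    (hC : ∀ᵐ x ∂μ.restrict s, ‖f x‖ ≤ C) :
    ‖∫ x in s, f x ∂μ‖ₑ ≤ ENNReal.ofReal C * μ s :=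
  calc ‖∫ x in s, f x ∂μ‖ₑ ≤ ∫⁻ x in s, ‖f x‖ₑ ∂μ := enorm_integral_le_lintegral_enorm _
    _ ≤ ∫⁻ _ in s, ENNReal.ofReal C ∂μ :=
        lintegral_mono_ae <| hC.mono fun x hx => by
          rw [← ofReal_norm]; exact ENNReal.ofReal_le_ofReal hx
    _ = ENNReal.ofReal C * μ s := setLIntegral_const _ _

theorem integral_norm_mul_norm_le_sqrt_mul_sqrt {α E : Type*} [MeasurableSpace α]
    [NormedAddCommGroup E] {μ : Measure α} {f g : α → E} (hf : MemLp f 2 μ) (hg : MemLp g 2 μ) :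
    ∫ x, ‖f x‖ * ‖g x‖ ∂μ ≤ √(∫ x, ‖f x‖ ^ 2 ∂μ) * √(∫ x, ‖g x‖ ^ 2 ∂μ) := by
  have h2 : ENNReal.ofReal 2 = 2 := by norm_num
  have := integral_mul_norm_le_Lp_mul_Lq Real.HolderConjugate.two_two
    (h2 ▸ hf : MemLp f (ENNReal.ofReal 2) μ) (h2 ▸ hg : MemLp g (ENNReal.ofReal 2) μ)
  simpa only [Real.rpow_two, Real.sqrt_eq_rpow, one_div] using this

theorem norm_qK (a d : ℝ) {b : ℝ} (hb : 0 < b) {u : Quaternion ℝ} (hu : u.re = 0) (x ω : ℝ) :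
    ‖qK a b d u x ω‖ = (√(2 * Real.pi * b))⁻¹ := by
  have hpos : 0 < 2 * Real.pi * b := by positivity
  rw [qK, norm_smul, Quaternion.norm_exp, Real.sqrt_eq_rpow, ← Real.rpow_neg hpos.le]
  simp [Quaternion.re_smul, hu, abs_of_nonneg (Real.rpow_nonneg hpos.le _), neg_div]

theorem norm_GQLCT_le (a₁ d₁ a₂ d₂ : ℝ) {b₁ b₂ : ℝ} (hb₁ : 0 < b₁) (hb₂ : 0 < b₂)
    {f φ : ℝ × ℝ → Quaternion ℝ} (hf : MemLp f 2 volume) (hφ : MemLp φ 2 volume)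
    (ω y : ℝ × ℝ) :
    ‖GQLCT a₁ b₁ d₁ a₂ b₂ d₂ φ f ω y‖ ≤
      (√(2 * Real.pi * b₁))⁻¹ * (√(2 * Real.pi * b₂))⁻¹ *
        (√(∫ x, ‖f x‖ ^ 2) * √(∫ x, ‖φ x‖ ^ 2)) := by
  have hφy : MemLp (fun x => φ (x - y)) 2 volume :=
    hφ.comp_measurePreserving (measurePreserving_sub_right volume y)
  have hshift : ∫ x, ‖φ (x - y)‖ ^ 2 = ∫ x, ‖φ x‖ ^ 2 :=
    integral_sub_right_eq_self (fun x => ‖φ x‖ ^ 2) y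
  calc ‖GQLCT a₁ b₁ d₁ a₂ b₂ d₂ φ f ω y‖
      ≤ ∫ x, ‖qK a₁ b₁ d₁ qi x.1 ω.1 * f x * star (φ (x - y)) * qK a₂ b₂ d₂ qj x.2 ω.2‖ :=
        norm_integral_le_integral_norm _
    _ = ∫ x, (√(2 * Real.pi * b₁))⁻¹ * (√(2 * Real.pi * b₂))⁻¹ * (‖f x‖ * ‖φ (x - y)‖) := by
        congr 1 with x
        simp only [norm_mul, norm_star, norm_qK a₁ d₁ hb₁ (u := qi) rfl,
          norm_qK a₂ d₂ hb₂ (u := qj) rfl]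
        ring
    _ ≤ _ := by
        rw [integral_const_mul, ← hshift]
        gcongr
        exact integral_norm_mul_norm_le_sqrt_mul_sqrt hf hφy

theorem gqlct_concentration_measure_bound_general (a₁ b₁ d₁ a₂ b₂ d₂ : ℝ)
    (hb₁ : 0 < b₁) (hb₂ : 0 < b₂)
    (f φ : ℝ × ℝ → Quaternion ℝ) (hf : MemLp f 2 volume) (hφ : MemLp φ 2 volume)
    (hfn : (∫ x : ℝ × ℝ, ‖f x‖ ^ 2) = 1) (hφn : (∫ x : ℝ × ℝ, ‖φ x‖ ^ 2) = 1)
    (S : Set ((ℝ × ℝ) × (ℝ × ℝ)))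
    (ε : ℝ)
    (hconc : (∫ z in S, ‖GQLCT a₁ b₁ d₁ a₂ b₂ d₂ φ f z.1 z.2‖ ^ 2) ≥ 1 - ε) :
    ENNReal.ofReal (4 * Real.pi ^ 2 * b₁ * b₂ * (1 - ε)) ≤ volume S := by
  set A := 4 * Real.pi ^ 2 * b₁ * b₂
  have hA : 0 < A := by positivity
  have hsq : ∀ z : (ℝ × ℝ) × (ℝ × ℝ), ‖‖GQLCT a₁ b₁ d₁ a₂ b₂ d₂ φ f z.1 z.2‖ ^ 2‖ ≤ A⁻¹ := by
    intro z
    have h := norm_GQLCT_le a₁ d₁ a₂ d₂ hb₁ hb₂ hf hφ z.1 z.2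
    rw [hfn, hφn, Real.sqrt_one, mul_one, mul_one] at h
    calc ‖‖GQLCT a₁ b₁ d₁ a₂ b₂ d₂ φ f z.1 z.2‖ ^ 2‖
        ≤ ((√(2 * Real.pi * b₁))⁻¹ * (√(2 * Real.pi * b₂))⁻¹) ^ 2 := by
          rw [norm_pow, norm_norm]; gcongr
      _ = A⁻¹ := by
          rw [mul_pow, inv_pow, inv_pow, Real.sq_sqrt (by positivity),
            Real.sq_sqrt (by positivity), ← mul_inv]
          ring
  calc ENNReal.ofReal (A * (1 - ε)) = ENNReal.ofReal A * ENNReal.ofReal (1 - ε) :=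
        ENNReal.ofReal_mul hA.le
    _ ≤ ENNReal.ofReal A * ‖∫ z in S, ‖GQLCT a₁ b₁ d₁ a₂ b₂ d₂ φ f z.1 z.2‖ ^ 2‖ₑ := by
        rw [Real.enorm_eq_ofReal_abs]
        gcongr
        exact hconc.le.trans (le_abs_self _)
    _ ≤ ENNReal.ofReal A * (ENNReal.ofReal A⁻¹ * volume S) := by
        gcongr
        exact enorm_setIntegral_le_ofReal_mul_measure (ae_of_all _ hsq)
    _ = volume S := by
        rw [← mul_assoc, ← ENNReal.ofReal_mul hA.le, mul_inv_cancel₀ hA.ne', ENNReal.ofReal_one,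
          one_mul]

theorem gqlct_concentration_measure_bound (a₁ b₁ c₁ d₁ a₂ b₂ c₂ d₂ : ℝ)
    (hdet₁ : a₁ * d₁ - b₁ * c₁ = 1) (hdet₂ : a₂ * d₂ - b₂ * c₂ = 1)
    (hb₁ : 0 < b₁) (hb₂ : 0 < b₂)
    (f φ : ℝ × ℝ → Quaternion ℝ) (hf : MemLp f 2 volume) (hφ : MemLp φ 2 volume)
    (hfn : (∫ x : ℝ × ℝ, ‖f x‖ ^ 2) = 1) (hφn : (∫ x : ℝ × ℝ, ‖φ x‖ ^ 2) = 1)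
    (S : Set ((ℝ × ℝ) × (ℝ × ℝ))) (hS : MeasurableSet S)
    (ε : ℝ) (hε0 : 0 ≤ ε) (hε1 : ε ≤ 1)
    (hconc : (∫ z in S, ‖GQLCT a₁ b₁ d₁ a₂ b₂ d₂ φ f z.1 z.2‖ ^ 2) ≥ 1 - ε) :
    ENNReal.ofReal (4 * Real.pi ^ 2 * b₁ * b₂ * (1 - ε)) ≤ volume S :=
  gqlct_concentration_measure_bound_general a₁ b₁ d₁ a₂ b₂ d₂ hb₁ hb₂ f φ hf hφ hfn hφn S ε hconc
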